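/- Let $K_\eta$ be the smooth truncation at scale $\eta>0$ of a Calderón–Zygmund kernel with modulus of continuity $\omega$. If for all $x,y,\xi$ with $|x-y|\ge\eta/4$, $|\xi|<\eta/8$ one has $|K_\eta(x,y)-K_\eta(x+\xi,y)|\le C|x-y|^{-n}[\omega(|\xi|/|x-y|)+|\xi|/|x-y|]$, and $K_\eta(x,y)=K_\eta(x+\xi,y)=0$ when $|x-y|<\eta/4$, then for any locally integrable $f$ and $x\in\mathbb{R}^n$, $$\int_{\mathbb{R}^n}|K_\eta(x,y)-K_\eta(x+\xi,y)|\,|f(y)|\,dy \le C'\left[\frac{|\xi|}{\eta}+\int_0^{8|\xi|/\eta}\frac{\omega(s)}{s}\,ds\right]\mathcal{M}f(x),$$ with $C'$ depending only on $n$ and $C$. -/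

import Mathlib

/-!
Split `‖x - y‖ ≥ η/4` into the dyadic annuli `2^k ρ ≤ ‖x - y‖ < 2^(k+1) ρ`, `ρ = η/4`. The
kernel bound is antitone in `‖x - y‖`, so on the `k`-th annulus the kernel difference is at most
`C (ω(a_k) + a_k) / (2^k ρ)^n` with `a_k = ‖ξ‖ / (2^k ρ)`; the annulus lies in a ball of volume
`2^n |B₁| (2^k ρ)^n` centred at `x`, so it contributes at most `2^n |B₁| C (ω(a_k) + a_k) Mf(x)`.
The `a_k` sum to `8‖ξ‖/η`, and monotonicity of `ω` gives `ω(a) log 2 ≤ ∫_a^{2a} ω(s)/s ds`, so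
`∑ ω(a_k)` is at most the Dini integral over `(0, 8‖ξ‖/η]` divided by `log 2`.
-/

open MeasureTheory ENNReal NNReal Metric Set

/-- The Hardy--Littlewood maximal function (ball averages), with values in `ℝ≥0∞`. -/
noncomputable def hlMaximal {n : ℕ} (f : EuclideanSpace ℝ (Fin n) → ℝ)
    (x : EuclideanSpace ℝ (Fin n)) : ℝ≥0∞ :=
  ⨆ (z : EuclideanSpace ℝ (Fin n)) (r : ℝ) (_ : 0 < r) (_ : x ∈ Metric.ball z r),
    (volume (Metric.ball z r))⁻¹ * ∫⁻ y in Metric.ball z r, ENNReal.ofReal |f y|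

theorem mul_log_two_le_setIntegral_Ioc_two_mul {ω : ℝ → ℝ} {a : ℝ} (ha : 0 < a)
    (hω : MonotoneOn ω (Icc a (2 * a)))
    (hint : IntegrableOn (fun s => ω s / s) (Ioc a (2 * a))) :
    ω a * Real.log 2 ≤ ∫ s in Ioc a (2 * a), ω s / s := by
  have hle : a ≤ 2 * a := by linarith
  have hconst : ∫ s in Ioc a (2 * a), ω a / s = ω a * Real.log 2 := by
    simp_rw [div_eq_mul_one_div (ω a)]
    rw [← intervalIntegral.integral_of_le hle, intervalIntegral.integral_const_mul,
      integral_one_div_of_pos ha (by linarith), mul_div_cancel_right₀ _ ha.ne']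
  rw [← hconst]
  refine setIntegral_mono_on ?_ hint measurableSet_Ioc fun s hs => ?_
  · refine (ContinuousOn.integrableOn_Icc ?_).mono_set Ioc_subset_Icc_self
    exact continuousOn_const.div continuousOn_id fun s hs => (ha.trans_le hs.1).ne'
  · exact div_le_div_of_nonneg_right (hω ⟨le_rfl, hle⟩ (Ioc_subset_Icc_self hs) hs.1.le)
      (ha.trans hs.1).le

theorem sum_dyadic_mul_log_two_le_setIntegral {ω : ℝ → ℝ} (N : ℕ) {t : ℝ} (ht : 0 < t)
    (hω0 : ∀ s ∈ Ioc 0 (2 * t), 0 ≤ ω s) (hω : MonotoneOn ω (Ioc 0 (2 * t)))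
    (hint : IntegrableOn (fun s => ω s / s) (Ioc 0 (2 * t))) :
    (∑ k ∈ Finset.range N, ω (t / 2 ^ k)) * Real.log 2 ≤ ∫ s in Ioc 0 (2 * t), ω s / s := by
  induction N generalizing t with
  | zero =>
    simpa using setIntegral_nonneg measurableSet_Ioc fun s hs => div_nonneg (hω0 s hs) hs.1.le
  | succ N ih =>
    have hsub : Ioc 0 (2 * (t / 2)) ⊆ Ioc 0 (2 * t) := by
      rw [mul_div_cancel₀ t two_ne_zero]; exact Ioc_subset_Ioc_right (by linarith)
    have hhalf := ih (half_pos ht) (fun s hs => hω0 s (hsub hs)) (hω.mono hsub) (hint.mono_set hsub)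
    simp only [div_div, ← pow_succ', mul_div_cancel₀ t two_ne_zero] at hhalf
    have htop := mul_log_two_le_setIntegral_Ioc_two_mul ht
      (hω.mono (Icc_subset_Ioc_iff (by linarith) |>.2 ⟨ht, le_rfl⟩))
      (hint.mono_set (Ioc_subset_Ioc_left ht.le))
    rw [Finset.sum_range_succ', add_mul, pow_zero, div_one,
      ← Ioc_union_Ioc_eq_Ioc ht.le (by linarith), setIntegral_union (Ioc_disjoint_Ioc_of_le le_rfl)
        measurableSet_Ioc (hint.mono_set (Ioc_subset_Ioc_right (by linarith)))
        (hint.mono_set (Ioc_subset_Ioc_left ht.le))]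
    exact add_le_add hhalf htop

theorem tsum_ofReal_dyadic_le {ω : ℝ → ℝ} {t : ℝ} (ht : 0 < t)
    (hω0 : ∀ s ∈ Ioc 0 (2 * t), 0 ≤ ω s) (hω : MonotoneOn ω (Ioc 0 (2 * t)))
    (hint : IntegrableOn (fun s => ω s / s) (Ioc 0 (2 * t))) :
    ∑' k, ENNReal.ofReal (ω (t / 2 ^ k) + t / 2 ^ k) ≤
      ENNReal.ofReal ((∫ s in Ioc 0 (2 * t), ω s / s) / Real.log 2 + 2 * t) := by
  have hmem : ∀ k : ℕ, t / 2 ^ k ∈ Ioc 0 (2 * t) := fun k =>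
    ⟨by positivity, (div_le_self ht.le (one_le_pow₀ one_le_two)).trans (by linarith)⟩
  refine ENNReal.tsum_le_of_sum_range_le fun N => ?_
  rw [← ENNReal.ofReal_sum_of_nonneg fun k _ => add_nonneg (hω0 _ (hmem k)) (hmem k).1.le]
  refine ENNReal.ofReal_le_ofReal ?_
  rw [Finset.sum_add_distrib]
  gcongr
  · rw [le_div_iff₀ (Real.log_pos one_lt_two)]
    exact sum_dyadic_mul_log_two_le_setIntegral N ht hω0 hω hint
  · calc ∑ k ∈ Finset.range N, t / 2 ^ k = t * ∑ k ∈ Finset.range N, (1 / 2 : ℝ) ^ k := by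
          simp only [Finset.mul_sum, one_div, inv_pow, ← div_eq_mul_inv]
      _ ≤ t * 2 := by gcongr; exact sum_geometric_two_le N
      _ = 2 * t := mul_comm _ _

theorem lintegral_le_tsum_mul_lintegral_ball {X : Type*} [PseudoMetricSpace X] [MeasurableSpace X]
    [OpensMeasurableSpace X] {μ : Measure X} (x : X) {ρ : ℝ} (hρ : 0 < ρ) {g F : X → ℝ≥0∞}
    (hF : AEMeasurable F μ) (b : ℕ → ℝ≥0∞) (hg0 : ∀ y, dist x y < ρ → g y = 0)
    (hg : ∀ k y, 2 ^ k * ρ ≤ dist x y → dist x y < 2 ^ (k + 1) * ρ → g y ≤ b k * F y) :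
    ∫⁻ y, g y ∂μ ≤ ∑' k, b k * ∫⁻ y in ball x (2 ^ (k + 1) * ρ), F y ∂μ := by
  set A : ℕ → Set X := fun k => ball x (2 ^ (k + 1) * ρ) \ ball x (2 ^ k * ρ)
  have hA : ∀ k, MeasurableSet (A k) := fun k => measurableSet_ball.diff measurableSet_ball
  have hpt : ∀ y, g y ≤ ∑' k, (A k).indicator (fun y => b k * F y) y := by
    intro y
    rcases lt_or_ge (dist x y) ρ with hy | hy
    · simp [hg0 y hy]
    obtain ⟨k, hk, hk'⟩ := exists_nat_pow_near ((one_le_div hρ).2 hy) one_lt_two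
    rw [le_div_iff₀ hρ] at hk
    rw [div_lt_iff₀ hρ] at hk'
    have hyA : y ∈ A k := ⟨mem_ball'.2 hk', fun h => (mem_ball'.1 h).not_ge hk⟩
    exact (hg k y hk hk').trans <| (indicator_of_mem hyA (fun y => b k * F y)).ge.trans
      (ENNReal.le_tsum k)
  calc ∫⁻ y, g y ∂μ ≤ ∫⁻ y, ∑' k, (A k).indicator (fun y => b k * F y) y ∂μ := lintegral_mono hpt
    _ = ∑' k, b k * ∫⁻ y in A k, F y ∂μ := by
      rw [lintegral_tsum fun k => (hF.const_mul (b k)).indicator (hA k)]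
      simp_rw [lintegral_indicator (hA _), lintegral_const_mul'' _ hF.restrict]
    _ ≤ ∑' k, b k * ∫⁻ y in ball x (2 ^ (k + 1) * ρ), F y ∂μ := by
      gcongr with k
      exact sdiff_subset

theorem lintegral_ball_le_measure_mul_hlMaximal {n : ℕ} (f : EuclideanSpace ℝ (Fin n) → ℝ)
    (x : EuclideanSpace ℝ (Fin n)) {R : ℝ} (hR : 0 < R) :
    ∫⁻ y in ball x R, ENNReal.ofReal |f y| ≤ volume (ball x R) * hlMaximal f x :=
  (ENNReal.inv_mul_le_iff (measure_ball_pos volume x hR).ne' measure_ball_lt_top.ne).1 <|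
    le_iSup₂_of_le x R (le_iSup₂_of_le hR (mem_ball_self hR) le_rfl)

theorem lintegral_mul_abs_le_tsum_mul_hlMaximal {n : ℕ} {f : EuclideanSpace ℝ (Fin n) → ℝ}
    (hf : AEMeasurable f) (x : EuclideanSpace ℝ (Fin n)) {ρ : ℝ} (hρ : 0 < ρ)
    {G : EuclideanSpace ℝ (Fin n) → ℝ} (c : ℕ → ℝ) (hG0 : ∀ y, ‖x - y‖ < ρ → G y = 0)
    (hG : ∀ k y, 2 ^ k * ρ ≤ ‖x - y‖ → ‖x - y‖ < 2 ^ (k + 1) * ρ →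
      G y ≤ c k / (2 ^ k * ρ) ^ n) :
    ∫⁻ y, ENNReal.ofReal (G y * |f y|) ≤
      ENNReal.ofReal (2 ^ n * (volume (ball (0 : EuclideanSpace ℝ (Fin n)) 1)).toReal) *
        (∑' k, ENNReal.ofReal (c k)) * hlMaximal f x := by
  have hscale : ∀ k : ℕ, ENNReal.ofReal (c k / (2 ^ k * ρ) ^ n) *
      (volume (ball x (2 ^ (k + 1) * ρ)) * hlMaximal f x) =
      ENNReal.ofReal (2 ^ n * (volume (ball (0 : EuclideanSpace ℝ (Fin n)) 1)).toReal) *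
        ENNReal.ofReal (c k) * hlMaximal f x := fun k => by
    have hr : (2 ^ k * ρ) ^ n ≠ 0 := by positivity
    have hc : c k / (2 ^ k * ρ) ^ n * (2 ^ (k + 1) * ρ) ^ n = c k * 2 ^ n := by
      rw [show (2 : ℝ) ^ (k + 1) * ρ = 2 * (2 ^ k * ρ) by ring, mul_pow (2 : ℝ)]
      field_simp
    rw [Measure.addHaar_ball_of_pos volume x (by positivity), finrank_euclideanSpace_fin,
      ← mul_assoc, ← mul_assoc, ← ENNReal.ofReal_mul' (by positivity), hc,
      ENNReal.ofReal_mul' (by positivity), ENNReal.ofReal_mul (by positivity),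
      ENNReal.ofReal_toReal measure_ball_lt_top.ne]
    ring
  calc ∫⁻ y, ENNReal.ofReal (G y * |f y|)
      ≤ ∑' k, ENNReal.ofReal (c k / (2 ^ k * ρ) ^ n) *
          ∫⁻ y in ball x (2 ^ (k + 1) * ρ), ENNReal.ofReal |f y| := by
        refine lintegral_le_tsum_mul_lintegral_ball x hρ hf.abs.ennreal_ofReal _
          (fun y hy => by simp [hG0 y (by rwa [← dist_eq_norm])]) fun k y hk hk' => ?_
        rw [dist_eq_norm] at hk hk'
        rw [← ENNReal.ofReal_mul' (abs_nonneg _)]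
        exact ENNReal.ofReal_le_ofReal (mul_le_mul_of_nonneg_right (hG k y hk hk') (abs_nonneg _))
    _ ≤ ∑' k, ENNReal.ofReal (c k / (2 ^ k * ρ) ^ n) *
          (volume (ball x (2 ^ (k + 1) * ρ)) * hlMaximal f x) := by
        gcongr with k
        exact lintegral_ball_le_measure_mul_hlMaximal f x (by positivity)
    _ = _ := by simp_rw [hscale, ENNReal.tsum_mul_right, ENNReal.tsum_mul_left]

theorem antitoneOn_div_pow_mul_add {ω : ℝ → ℝ} (hω0 : ∀ s ∈ Ico (0 : ℝ) 1, 0 ≤ ω s)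
    (hω : MonotoneOn ω (Ico 0 1)) {C : ℝ} (hC : 0 ≤ C) (n : ℕ) {t : ℝ} (ht : 0 ≤ t) :
    AntitoneOn (fun d => C / d ^ n * (ω (t / d) + t / d)) (Ioi t) := by
  intro r hr d _ hrd
  have hr0 : 0 < r := ht.trans_lt hr
  have htd : t / d ≤ t / r := div_le_div_of_nonneg_left ht hr0 hrd
  have htr : t / r < 1 := (div_lt_one hr0).2 hr
  have hmem : t / d ∈ Ico (0 : ℝ) 1 := ⟨div_nonneg ht (hr0.trans_le hrd).le, htd.trans_lt htr⟩
  exact mul_le_mul (by gcongr) (add_le_add (hω hmem ⟨div_nonneg ht hr0.le, htr⟩ htd) htd)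
    (add_nonneg (hω0 _ hmem) hmem.1) (by positivity)

/-- If the truncated kernel `K_η` satisfies the translation-difference estimate for
`|x-y| ≥ η/4`, `|ξ| < η/8`, and vanishes for `|x-y| < η/4`, then
`∫ |K_η(x,y)-K_η(x+ξ,y)| |f(y)| dy ≤ C' [|ξ|/η + ∫_0^{8|ξ|/η} ω(s)/s ds] M f(x)`. -/
theorem stmt6 (n : ℕ) (η : ℝ) (hη : 0 < η)
    (Kη : EuclideanSpace ℝ (Fin n) → EuclideanSpace ℝ (Fin n) → ℂ)
    (ω : ℝ → ℝ) (hω0 : ∀ t, 0 ≤ ω t) (hωmono : MonotoneOn ω (Set.Ico 0 1))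
    (hDini : IntegrableOn (fun t => ω t / t) (Set.Ioc 0 1) volume)
    (C : ℝ) (hC : 0 < C)
    (hdiff : ∀ x y ξ : EuclideanSpace ℝ (Fin n), ‖ξ‖ < η / 8 → η / 4 ≤ ‖x - y‖ →
      ‖Kη x y - Kη (x + ξ) y‖ ≤
        C / ‖x - y‖ ^ (n : ℝ) * (ω (‖ξ‖ / ‖x - y‖) + ‖ξ‖ / ‖x - y‖))
    (hvanish : ∀ x y ξ : EuclideanSpace ℝ (Fin n), ‖ξ‖ < η / 8 → ‖x - y‖ < η / 4 →
      Kη x y = 0 ∧ Kη (x + ξ) y = 0) :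
    ∃ C' : ℝ, 0 < C' ∧ ∀ ξ : EuclideanSpace ℝ (Fin n), ‖ξ‖ < η / 8 →
      ∀ f : EuclideanSpace ℝ (Fin n) → ℝ, LocallyIntegrable f volume → ∀ x,
        (∫⁻ y, ENNReal.ofReal (‖Kη x y - Kη (x + ξ) y‖ * |f y|)) ≤
          ENNReal.ofReal (C' * (‖ξ‖ / η +
              ∫ s in Set.Ioc (0 : ℝ) (8 * ‖ξ‖ / η), ω s / s)) *
            hlMaximal f x := by
  set V := (volume (ball (0 : EuclideanSpace ℝ (Fin n)) 1)).toReal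
  have hV : 0 < V := ENNReal.toReal_pos (measure_ball_pos volume _ one_pos).ne'
    measure_ball_lt_top.ne
  have hlog : 0 < Real.log 2 := Real.log_pos one_lt_two
  refine ⟨2 ^ n * V * C * (8 + 1 / Real.log 2), by positivity, fun ξ hξ f hf x => ?_⟩
  rcases eq_or_ne ξ 0 with rfl | hξ0
  · simp
  set ρ := η / 4 with hρ
  set t := ‖ξ‖ / ρ with ht_def
  have ht : 0 < t := by positivity
  have h2t : 2 * t = 8 * ‖ξ‖ / η := by rw [ht_def, hρ]; field_simp; ring
  have h2t1 : 2 * t < 1 := by rw [h2t, div_lt_one hη]; linarith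
  set I := ∫ s in Ioc (0 : ℝ) (8 * ‖ξ‖ / η), ω s / s
  have hI : 0 ≤ I := setIntegral_nonneg measurableSet_Ioc fun s hs => div_nonneg (hω0 s) hs.1.le
  have hdyadic := tsum_ofReal_dyadic_le ht (fun s _ => hω0 s)
    (hωmono.mono fun s hs => ⟨hs.1.le, hs.2.trans_lt h2t1⟩)
    (hDini.mono_set (Ioc_subset_Ioc_right h2t1.le))
  rw [h2t] at hdyadic
  have hkernel : ∀ k y, 2 ^ k * ρ ≤ ‖x - y‖ → ‖Kη x y - Kη (x + ξ) y‖ ≤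
      C * (ω (t / 2 ^ k) + t / 2 ^ k) / (2 ^ k * ρ) ^ n := by
    intro k y hk
    have hρk : ρ ≤ 2 ^ k * ρ := le_mul_of_one_le_left (by positivity) (one_le_pow₀ one_le_two)
    have hξk : ‖ξ‖ < 2 ^ k * ρ := by linarith
    have hbound := hdiff x y ξ hξ (hρk.trans hk)
    rw [Real.rpow_natCast] at hbound
    simpa only [ht_def, div_mul_eq_div_div_swap, ← div_mul_eq_mul_div] using hbound.trans
      (antitoneOn_div_pow_mul_add (fun s _ => hω0 s) hωmono hC.le n (norm_nonneg ξ) hξk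
        (hξk.trans_le hk) hk)
  have hconst : I / Real.log 2 + 8 * ‖ξ‖ / η ≤ (8 + 1 / Real.log 2) * (‖ξ‖ / η + I) := by
    have hu : 0 ≤ ‖ξ‖ / η / Real.log 2 := by positivity
    have hexp : (8 + 1 / Real.log 2) * (‖ξ‖ / η + I) =
        8 * ‖ξ‖ / η + 8 * I + ‖ξ‖ / η / Real.log 2 + I / Real.log 2 := by ring
    linarith
  calc _ ≤ ENNReal.ofReal (2 ^ n * V) *
          (∑' k, ENNReal.ofReal (C * (ω (t / 2 ^ k) + t / 2 ^ k))) * hlMaximal f x :=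
        lintegral_mul_abs_le_tsum_mul_hlMaximal hf.aestronglyMeasurable.aemeasurable x
          (by positivity) _ (fun y hy => by simp [hvanish x y ξ hξ hy])
          fun k y hk _ => hkernel k y hk
    _ ≤ ENNReal.ofReal (2 ^ n * V) * ENNReal.ofReal (C * (I / Real.log 2 + 8 * ‖ξ‖ / η)) *
          hlMaximal f x := by
        simp_rw [ENNReal.ofReal_mul hC.le, ENNReal.tsum_mul_left]
        gcongr
    _ ≤ _ := by
        rw [← ENNReal.ofReal_mul (by positivity)]
        gcongr ?_ * _
        refine ENNReal.ofReal_le_ofReal ?_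
        nlinarith [mul_le_mul_of_nonneg_left hconst (by positivity : 0 ≤ 2 ^ n * V * C)]
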